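/- If A is a critical independent set of a graph G, then α(G) = α(G[N[A]]) + α(G − N[A]), where G − N[A] is the subgraph induced by V(G) − N[A]. -/

import Mathlib

open Finset

variable {V : Type*}

namespace CrownPaper

variable [Fintype V] [DecidableEq V]

/-- The (open) neighborhood of a finite set of vertices. -/
def nbrs (G : SimpleGraph V) [DecidableRel G.Adj] (A : Finset V) : Finset V :=
  univ.filter (fun v => ∃ a ∈ A, G.Adj v a)

/-- The closed neighborhood `N[A] = A ∪ N(A)`. -/
def closedNbrs (G : SimpleGraph V) [DecidableRel G.Adj] (A : Finset V) : Finset V :=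
  A ∪ nbrs G A

/-- `S` is an independent set of `G`. -/
def IsIndep (G : SimpleGraph V) (S : Finset V) : Prop :=
  ∀ a ∈ S, ∀ b ∈ S, ¬ G.Adj a b

/-- The difference `d(S) = |S| - |N(S)|`. -/
def diff (G : SimpleGraph V) [DecidableRel G.Adj] (S : Finset V) : ℤ :=
  (S.card : ℤ) - ((nbrs G S).card : ℤ)

/-- `S` is a critical independent set. -/
def IsCritIndep (G : SimpleGraph V) [DecidableRel G.Adj] (S : Finset V) : Prop :=
  IsIndep G S ∧ ∀ I : Finset V, IsIndep G I → diff G I ≤ diff G S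

/-- `S` is a crown: an independent set with a matching from `N(S)` into `S`. -/
def IsCrown (G : SimpleGraph V) [DecidableRel G.Adj] (S : Finset V) : Prop :=
  IsIndep G S ∧ ∃ f : V → V, (∀ v ∈ nbrs G S, f v ∈ S ∧ G.Adj v (f v)) ∧
    Set.InjOn f (nbrs G S : Set V)

/-- `S` is a local maximum independent set: a maximum independent set of `G[N[S]]`. -/
def IsLocalMaxIndep (G : SimpleGraph V) [DecidableRel G.Adj] (S : Finset V) : Prop :=
  IsIndep G S ∧ ∀ I : Finset V, IsIndep G I → I ⊆ closedNbrs G S → I.card ≤ S.card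

/-- The independence number. -/
noncomputable def alpha (G : SimpleGraph V) : ℕ :=
  sSup {n | ∃ S : Finset V, IsIndep G S ∧ S.card = n}

/-- `M` is a matching of `G`, given as a finite set of (ordered) edges. -/
def IsMatching (G : SimpleGraph V) (M : Finset (V × V)) : Prop :=
  (∀ e ∈ M, G.Adj e.1 e.2) ∧
  ∀ e ∈ M, ∀ e' ∈ M, e ≠ e' →
    e.1 ≠ e'.1 ∧ e.1 ≠ e'.2 ∧ e.2 ≠ e'.1 ∧ e.2 ≠ e'.2

/-- The matching number. -/
noncomputable def mu (G : SimpleGraph V) : ℕ :=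
  sSup {n | ∃ M : Finset (V × V), IsMatching G M ∧ M.card = n}

/-- `G` has a perfect matching. -/
def HasPerfectMatching (G : SimpleGraph V) : Prop :=
  ∃ M : Finset (V × V), IsMatching G M ∧ ∀ v : V, ∃ e ∈ M, v = e.1 ∨ v = e.2

/-- `G` is a König–Egerváry graph: `α(G) + μ(G) = |V(G)|`. -/
def IsKonigEgervary (G : SimpleGraph V) : Prop :=
  alpha G + mu G = Fintype.card V

/-- `G` is bipartite. -/
def IsBipartite (G : SimpleGraph V) : Prop :=
  ∃ X : Set V, ∀ a b : V, G.Adj a b → (a ∈ X ↔ b ∉ X)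

end CrownPaper

/-!
Hall's condition holds from `N(A)` into `A` for a critical independent set `A`: if some
`T ⊆ N(A)` had fewer than `|T|` neighbours `B` in `A`, then `A \ B` would have a larger difference
than `A`. The resulting matching sends every vertex of `I ∩ N(A)`, for an independent `I ⊆ N[A]`,
to a vertex of `A \ I`, so `|I| ≤ |A|` and `α(G[N[A]]) = |A|`. A maximum independent set of `G`
then splits into a part inside `N[A]` and a part in `G - N[A]`, while conversely `A` together with
any independent set of `G - N[A]` is independent.
-/

namespace CrownPaper

section IndependenceNumber

variable {W : Type*} {G : SimpleGraph W}

lemma IsIndep.mono {S T : Finset W} (hS : IsIndep G S) (hTS : T ⊆ S) : IsIndep G T :=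
  fun a ha b hb => hS a (hTS ha) b (hTS hb)

lemma bddAbove_indep_cards [Finite W] (G : SimpleGraph W) :
    BddAbove {n | ∃ S : Finset W, IsIndep G S ∧ S.card = n} := by
  have := Fintype.ofFinite W
  refine ⟨Fintype.card W, ?_⟩
  intro n hn
  obtain ⟨S, -, rfl⟩ := hn
  exact S.card_le_univ

lemma card_le_alpha [Finite W] {S : Finset W} (hS : IsIndep G S) : S.card ≤ alpha G :=
  le_csSup (bddAbove_indep_cards G) ⟨S, hS, rfl⟩

lemma exists_isIndep_card_eq_alpha [Finite W] (G : SimpleGraph W) :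
    ∃ S : Finset W, IsIndep G S ∧ S.card = alpha G :=
  Nat.sSup_mem (s := {n | ∃ S : Finset W, IsIndep G S ∧ S.card = n})
    ⟨0, ∅, by simp [IsIndep], rfl⟩ (bddAbove_indep_cards G)

end IndependenceNumber

section InducedSubgraph

variable {G : SimpleGraph V} {s : Set V}

lemma isIndep_induce_iff {J : Finset s} :
    IsIndep (G.induce s) J ↔ IsIndep G (J.map (Function.Embedding.subtype _)) := by
  simp [IsIndep]

lemma IsIndep.card_le_alpha_induce [Finite V] {I : Finset V} (hI : IsIndep G I) (hIs : ↑I ⊆ s) :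
    I.card ≤ alpha (G.induce s) := by
  classical
  have hmap : (I.subtype (· ∈ s)).map (Function.Embedding.subtype _) = I :=
    subtype_map_of_mem fun _ hx => hIs hx
  rw [← hmap, card_map]
  exact card_le_alpha (isIndep_induce_iff.mpr (by rwa [hmap]))

lemma exists_isIndep_subset_card_eq_alpha_induce [Finite V] (G : SimpleGraph V) (s : Set V) :
    ∃ I : Finset V, IsIndep G I ∧ ↑I ⊆ s ∧ I.card = alpha (G.induce s) := by
  obtain ⟨J, hJ, hJcard⟩ := exists_isIndep_card_eq_alpha (G.induce s)
  refine ⟨J.map (Function.Embedding.subtype _), isIndep_induce_iff.mp hJ, ?_, by simpa⟩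
  simp

end InducedSubgraph

variable [Fintype V] {G : SimpleGraph V} [DecidableRel G.Adj] {A : Finset V}

@[simp]
lemma mem_nbrs {v : V} : v ∈ nbrs G A ↔ ∃ a ∈ A, G.Adj v a := by
  simp [nbrs]

variable [DecidableEq V]

lemma IsIndep.union_of_disjoint_nbrs {T : Finset V} (hA : IsIndep G A) (hT : IsIndep G T)
    (hTA : Disjoint T (nbrs G A)) : IsIndep G (A ∪ T) := by
  have hnot (a) (ha : a ∈ A) (t) (ht : t ∈ T) : ¬ G.Adj t a :=
    fun hadj => disjoint_left.mp hTA ht (mem_nbrs.mpr ⟨a, ha, hadj⟩)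
  intro a ha b hb
  rcases mem_union.mp ha with ha | ha <;> rcases mem_union.mp hb with hb | hb
  · exact hA a ha b hb
  · exact fun hadj => hnot a ha b hb hadj.symm
  · exact hnot b hb a ha
  · exact hT a ha b hb

lemma IsCritIndep.card_le_card_inter_nbrs (hA : IsCritIndep G A) {T : Finset V}
    (hT : T ⊆ nbrs G A) : T.card ≤ (A ∩ nbrs G T).card := by
  set B := A ∩ nbrs G T
  have hBA : B ⊆ A := inter_subset_left
  have hnbrs : nbrs G (A \ B) ⊆ nbrs G A \ T := by
    intro v hv
    obtain ⟨a, ha, hva⟩ := mem_nbrs.mp hv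
    obtain ⟨haA, haB⟩ := mem_sdiff.mp ha
    refine mem_sdiff.mpr ⟨mem_nbrs.mpr ⟨a, haA, hva⟩, fun hvT => haB ?_⟩
    exact mem_inter.mpr ⟨haA, mem_nbrs.mpr ⟨v, hvT, hva.symm⟩⟩
  have hcrit := hA.2 (A \ B) (hA.1.mono sdiff_subset)
  have hcard := card_le_card hnbrs
  rw [card_sdiff_of_subset hT] at hcard
  simp only [diff, card_sdiff_of_subset hBA] at hcrit
  have := card_le_card hBA
  have := card_le_card hT
  omega

lemma IsCritIndep.isCrown (hA : IsCritIndep G A) : IsCrown G A := by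
  let t (v : nbrs G A) : Finset V := A.filter (G.Adj v)
  have hall (S : Finset (nbrs G A)) : S.card ≤ (S.biUnion t).card := by
    have hsub : A ∩ nbrs G (S.map (Function.Embedding.subtype _)) ⊆ S.biUnion t := by
      intro a ha
      obtain ⟨haA, hanbrs⟩ := mem_inter.mp ha
      obtain ⟨v, hv, hav⟩ := mem_nbrs.mp hanbrs
      obtain ⟨w, hw, rfl⟩ := mem_map.mp hv
      exact mem_biUnion.mpr ⟨w, hw, mem_filter.mpr ⟨haA, hav.symm⟩⟩
    calc S.card = (S.map (Function.Embedding.subtype _)).card := (card_map _).symm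
      _ ≤ (A ∩ nbrs G (S.map (Function.Embedding.subtype _))).card :=
        hA.card_le_card_inter_nbrs fun v hv => by
          obtain ⟨w, -, rfl⟩ := mem_map.mp hv
          exact w.2
      _ ≤ (S.biUnion t).card := card_le_card hsub
  obtain ⟨f, hfinj, hft⟩ := (all_card_le_biUnion_card_iff_exists_injective t).mp hall
  let g (v : V) : V := if hv : v ∈ nbrs G A then f ⟨v, hv⟩ else v
  have hg (v : nbrs G A) : g v = f v := dif_pos v.2
  refine ⟨hA.1, g, fun v hv => hg ⟨v, hv⟩ ▸ mem_filter.mp (hft ⟨v, hv⟩), ?_⟩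
  rw [Set.injOn_iff_injective]
  intro v w hvw
  exact hfinj (by simpa [hg] using hvw)

lemma IsCrown.isLocalMaxIndep (hA : IsCrown G A) : IsLocalMaxIndep G A := by
  obtain ⟨hAind, g, hg, hginj⟩ := hA
  refine ⟨hAind, fun I hI hIA => ?_⟩
  have hIdiff : I \ A ⊆ nbrs G A := by
    intro v hv
    obtain ⟨hvI, hvA⟩ := mem_sdiff.mp hv
    simpa [closedNbrs, hvA] using hIA hvI
  have hmaps : Set.MapsTo g ↑(I \ A) ↑(A \ I) := by
    intro v hv
    obtain ⟨hgA, hadj⟩ := hg v (hIdiff hv)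
    exact mem_sdiff.mpr ⟨hgA, fun hgI => hI v (mem_sdiff.mp hv).1 (g v) hgI hadj⟩
  exact card_sdiff_le_card_sdiff_iff.mp <|
    card_le_card_of_injOn g hmaps (hginj.mono (coe_subset.mpr hIdiff))

lemma IsLocalMaxIndep.alpha_induce_closedNbrs (hA : IsLocalMaxIndep G A) :
    alpha (G.induce (↑(closedNbrs G A) : Set V)) = A.card := by
  obtain ⟨I, hI, hIsub, hIcard⟩ := exists_isIndep_subset_card_eq_alpha_induce G
    ↑(closedNbrs G A)
  exact le_antisymm (hIcard ▸ hA.2 I hI (coe_subset.mp hIsub))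
    (hA.1.card_le_alpha_induce (by simp [closedNbrs]))

theorem IsLocalMaxIndep.alpha_eq_add (hA : IsLocalMaxIndep G A) :
    alpha G = alpha (G.induce (↑(closedNbrs G A) : Set V)) +
      alpha (G.induce (↑((closedNbrs G A)ᶜ) : Set V)) := by
  rw [hA.alpha_induce_closedNbrs]
  set F := closedNbrs G A
  apply le_antisymm
  · obtain ⟨S, hS, hScard⟩ := exists_isIndep_card_eq_alpha G
    have hin : (S ∩ F).card ≤ A.card := hA.2 _ (hS.mono inter_subset_left) inter_subset_right
    have hout : (S \ F).card ≤ alpha (G.induce (↑Fᶜ : Set V)) :=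
      (hS.mono sdiff_subset).card_le_alpha_induce (by simp)
    rw [← hScard, ← card_inter_add_card_sdiff S F]
    exact add_le_add hin hout
  · obtain ⟨T, hT, hTF, hTcard⟩ := exists_isIndep_subset_card_eq_alpha_induce G ↑Fᶜ
    have hTF' : Disjoint T F := subset_compl_iff_disjoint_right.mp (coe_subset.mp hTF)
    have hunion := hA.1.union_of_disjoint_nbrs hT
      (hTF'.mono_right subset_union_right)
    rw [← hTcard, ← card_union_of_disjoint (hTF'.symm.mono_left subset_union_left)]
    exact card_le_alpha hunion

end CrownPaper

open CrownPaper

theorem alpha_split_of_crit_indep (G : SimpleGraph V) [Fintype V] [DecidableEq V]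
    [DecidableRel G.Adj] (A : Finset V) (hA : IsCritIndep G A) :
    alpha G = alpha (G.induce (↑(closedNbrs G A) : Set V)) +
      alpha (G.induce (↑((closedNbrs G A)ᶜ) : Set V)) :=
  hA.isCrown.isLocalMaxIndep.alpha_eq_add
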